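/- arXiv:2510.01752 — 10 statements merged into one kernel-verified Lean document; each statement's English description precedes it below -/
import Mathlib

section
/- The integer s = 1911 = 637 · 3 is an odd spoof 152-perfect number of order 5: σ(637)·(3⁵ + 3⁴ + 3³ + 3² + 3 + 1) = 152 · 1911; moreover 3 is prime, 3 is coprime to 637, and 1911 is odd. -/
set_option maxRecDepth 10000 in
theorem spoof_1911 :
    (1911 : ℕ) = 637 * 3 ∧
    ArithmeticFunction.sigma 1 637 * (3 ^ 5 + 3 ^ 4 + 3 ^ 3 + 3 ^ 2 + 3 + 1) = 152 * 1911 ∧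
    Nat.Prime 3 ∧
    Nat.Coprime 3 637 ∧
    Odd (1911 : ℕ) := by
  refine ⟨rfl, ?_, by norm_num, by decide, by decide⟩
  rw [ArithmeticFunction.sigma_apply]
  decide
end

section
/- The integer s = 34485 = 11495 · 3 is an odd spoof 56-perfect number of order 4: σ(11495)·(3⁴ + 3³ + 3² + 3 + 1) = 56 · 34485; moreover 3 is prime, 3 is coprime to 11495, and 34485 is odd. -/
set_option maxRecDepth 4000

lemma sigma_small (n : ℕ) (m : Finset ℕ) (h : Nat.divisors n = m) :
    ArithmeticFunction.sigma 1 n = Finset.sum m (· ^ 1) := by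
  rw [ArithmeticFunction.sigma_apply, h]

lemma sigma_11495 : ArithmeticFunction.sigma 1 11495 = 15960 := by
  have h1 : (11495 : ℕ) = 5 * 2299 := by norm_num
  have h2 : (2299 : ℕ) = 121 * 19 := by norm_num
  have hm := ArithmeticFunction.isMultiplicative_sigma (k := 1)
  rw [h1, hm.map_mul_of_coprime (by decide), h2, hm.map_mul_of_coprime (by decide)]
  rw [sigma_small 5 {1,5} (by decide), sigma_small 121 {1,11,121} (by decide),
    sigma_small 19 {1,19} (by decide)]
  decide

theorem spoof_34485 :
    (34485 : ℕ) = 11495 * 3 ∧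
    ArithmeticFunction.sigma 1 11495 * (3 ^ 4 + 3 ^ 3 + 3 ^ 2 + 3 + 1) = 56 * 34485 ∧
    Nat.Prime 3 ∧
    Nat.Coprime 3 11495 ∧
    Odd (34485 : ℕ) := by
  refine ⟨by norm_num, ?_, by norm_num, by decide, by decide⟩
  rw [sigma_11495]; norm_num
end

section
/- The integer s = 36309 = 12103 · 3 is an odd spoof 160-perfect number of order 5: σ(12103)·(3⁵ + 3⁴ + 3³ + 3² + 3 + 1) = 160 · 36309; moreover 3 is prime, 3 is coprime to 12103, and 36309 is odd. -/
theorem spoof_36309 :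
    (36309 : ℕ) = 12103 * 3 ∧
    ArithmeticFunction.sigma 1 12103 * (3 ^ 5 + 3 ^ 4 + 3 ^ 3 + 3 ^ 2 + 3 + 1) = 160 * 36309 ∧
    Nat.Prime 3 ∧
    Nat.Coprime 3 12103 ∧
    Odd (36309 : ℕ) := by
  have h7 : Nat.Prime 7 := by norm_num
  have h13 : Nat.Prime 13 := by norm_num
  have h19 : Nat.Prime 19 := by norm_num
  have hσ : ArithmeticFunction.sigma 1 12103 = 15960 := by
    have e : (12103 : ℕ) = 7 ^ 2 * (13 * 19) := by norm_num
    rw [e, ArithmeticFunction.isMultiplicative_sigma.map_mul_of_coprime (by norm_num),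
      ArithmeticFunction.isMultiplicative_sigma.map_mul_of_coprime (by norm_num),
      ArithmeticFunction.sigma_one_apply_prime_pow h7]
    have := ArithmeticFunction.sigma_one_apply_prime_pow (i := 1) h13
    have := ArithmeticFunction.sigma_one_apply_prime_pow (i := 1) h19
    simp at this ⊢
    norm_num [ArithmeticFunction.sigma_one_apply_prime_pow (i := 1) h13,
      ArithmeticFunction.sigma_one_apply_prime_pow (i := 1) h19]
    decide
  exact ⟨by norm_num, by rw [hσ]; norm_num, by norm_num, by decide, by decide⟩
end

section
/- The integer s = 77805 = 11115 · 7 is an odd spoof 16-perfect number of order 2: σ(11115)·(7² + 7 + 1) = 16 · 77805; moreover 7 is prime, 7 is coprime to 11115, and 77805 is odd. -/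
set_option maxRecDepth 20000 in
theorem spoof_77805 :
    (77805 : ℕ) = 11115 * 7 ∧
    ArithmeticFunction.sigma 1 11115 * (7 ^ 2 + 7 + 1) = 16 * 77805 ∧
    Nat.Prime 7 ∧
    Nat.Coprime 7 11115 ∧
    Odd (77805 : ℕ) := by
  refine ⟨by norm_num, ?_, by norm_num, by decide, by decide⟩
  rw [ArithmeticFunction.sigma_one_apply]
  rw [show Nat.divisors 11115 = {1,3,5,9,13,15,19,39,45,57,65,95,117,171,195,247,285,585,741,855,1235,2223,3705,11115} from by decide]
  decide
end

section
/- The integer s = 92781 = 1521 · 61 is an odd spoof 97-perfect number of order 2: σ(1521)·(61² + 61 + 1) = 97 · 92781; moreover 61 is prime, 61 is coprime to 1521, and 92781 is odd. -/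
set_option maxRecDepth 10000 in
theorem spoof_92781 :
    (92781 : ℕ) = 1521 * 61 ∧
    ArithmeticFunction.sigma 1 1521 * (61 ^ 2 + 61 + 1) = 97 * 92781 ∧
    Nat.Prime 61 ∧
    Nat.Coprime 61 1521 ∧
    Odd (92781 : ℕ) := by
  refine ⟨by norm_num, ?_, by norm_num, by decide, by decide⟩
  rw [ArithmeticFunction.sigma_one_apply]
  have : Nat.divisors 1521 = {1, 3, 9, 13, 39, 117, 169, 507, 1521} := by decide
  rw [this]
  decide
end

section
/- The integer s = 105435 = 21087 · 5 is an odd spoof 256-perfect number of order 4: σ(21087)·(5⁴ + 5³ + 5² + 5 + 1) = 256 · 105435; moreover 5 is prime, 5 is coprime to 21087, and 105435 is odd. -/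
set_option maxRecDepth 10000 in
theorem spoof_105435 :
    (105435 : ℕ) = 21087 * 5 ∧
    ArithmeticFunction.sigma 1 21087 * (5 ^ 4 + 5 ^ 3 + 5 ^ 2 + 5 + 1) = 256 * 105435 ∧
    Nat.Prime 5 ∧
    Nat.Coprime 5 21087 ∧
    Odd (105435 : ℕ) := by
  refine ⟨by norm_num, ?_, by norm_num, by decide, by decide⟩
  have h : ArithmeticFunction.sigma 1 21087 = 34560 := by
    have h1 : (21087 : ℕ) = 27 * 781 := by norm_num
    have h2 : (781 : ℕ) = 11 * 71 := by norm_num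
    rw [h1, ArithmeticFunction.isMultiplicative_sigma.map_mul_of_coprime (by decide),
      h2, ArithmeticFunction.isMultiplicative_sigma.map_mul_of_coprime (by decide)]
    rw [ArithmeticFunction.sigma_apply, ArithmeticFunction.sigma_apply,
      ArithmeticFunction.sigma_apply]
    decide
  rw [h]; norm_num
end

section
/- The integer s = 181545 = 60515 · 3 is an odd spoof 192-perfect number of order 5: σ(60515)·(3⁵ + 3⁴ + 3³ + 3² + 3 + 1) = 192 · 181545; moreover 3 is prime, 3 is coprime to 60515, and 181545 is odd. -/
open ArithmeticFunction in
lemma sigma_60515 : ArithmeticFunction.sigma 1 60515 = 95760 := by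
  have hm := ArithmeticFunction.isMultiplicative_sigma (k := 1)
  have h5 : ArithmeticFunction.sigma 1 5 = 6 := by
    rw [ArithmeticFunction.sigma_apply, show (5:ℕ).divisors = {1,5} by decide]; decide
  have h49 : ArithmeticFunction.sigma 1 49 = 57 := by
    rw [ArithmeticFunction.sigma_apply, show (49:ℕ).divisors = {1,7,49} by decide]; decide
  have h13 : ArithmeticFunction.sigma 1 13 = 14 := by
    rw [ArithmeticFunction.sigma_apply, show (13:ℕ).divisors = {1,13} by decide]; decide
  have h19 : ArithmeticFunction.sigma 1 19 = 20 := by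
    rw [ArithmeticFunction.sigma_apply, show (19:ℕ).divisors = {1,19} by decide]; decide
  have e1 : (60515 : ℕ) = 5 * (49 * (13 * 19)) := by norm_num
  rw [e1, hm.map_mul_of_coprime (by decide), hm.map_mul_of_coprime (by decide),
    hm.map_mul_of_coprime (by decide), h5, h49, h13, h19]
  norm_num

theorem spoof_181545 :
    (181545 : ℕ) = 60515 * 3 ∧
    ArithmeticFunction.sigma 1 60515 * (3 ^ 5 + 3 ^ 4 + 3 ^ 3 + 3 ^ 2 + 3 + 1) = 192 * 181545 ∧
    Nat.Prime 3 ∧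
    Nat.Coprime 3 60515 ∧
    Odd (181545 : ℕ) := by
  refine ⟨by norm_num, ?_, by norm_num, by decide, by decide⟩
  rw [sigma_60515]; norm_num
end

section
/- The integer s = 241395 = 80465 · 3 is an odd spoof 64-perfect number of order 4: σ(80465)·(3⁴ + 3³ + 3² + 3 + 1) = 64 · 241395; moreover 3 is prime, 3 is coprime to 80465, and 241395 is odd. -/
open ArithmeticFunction in
lemma sigma_80465 : ArithmeticFunction.sigma 1 80465 = 127680 := by
  have hmul := ArithmeticFunction.isMultiplicative_sigma (k := 1)
  have h5 : ArithmeticFunction.sigma 1 5 = 6 := by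
    rw [ArithmeticFunction.sigma_one_apply]; decide
  have h7 : ArithmeticFunction.sigma 1 7 = 8 := by
    rw [ArithmeticFunction.sigma_one_apply]; decide
  have h121 : ArithmeticFunction.sigma 1 121 = 133 := by
    rw [ArithmeticFunction.sigma_one_apply]; decide
  have h19 : ArithmeticFunction.sigma 1 19 = 20 := by
    rw [ArithmeticFunction.sigma_one_apply]; decide
  have e1 : (80465 : ℕ) = 5 * (7 * (121 * 19)) := by norm_num
  rw [e1, hmul.map_mul_of_coprime (by decide), hmul.map_mul_of_coprime (by decide),
    hmul.map_mul_of_coprime (by decide), h5, h7, h121, h19]; norm_num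

theorem spoof_241395 :
    (241395 : ℕ) = 80465 * 3 ∧
    ArithmeticFunction.sigma 1 80465 * (3 ^ 4 + 3 ^ 3 + 3 ^ 2 + 3 + 1) = 64 * 241395 ∧
    Nat.Prime 3 ∧
    Nat.Coprime 3 80465 ∧
    Odd (241395 : ℕ) := by
  refine ⟨by norm_num, ?_, by norm_num, by decide, by decide⟩
  rw [sigma_80465]; norm_num
end

section
/- The integer s = 8999757 = 147537 · 61 is an odd spoof 98-perfect number of order 2: σ(147537)·(61² + 61 + 1) = 98 · 8999757; moreover 61 is prime, 61 is coprime to 147537, and 8999757 is odd. -/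
theorem spoof_8999757 :
    (8999757 : ℕ) = 147537 * 61 ∧
    ArithmeticFunction.sigma 1 147537 * (61 ^ 2 + 61 + 1) = 98 * 8999757 ∧
    Nat.Prime 61 ∧
    Nat.Coprime 61 147537 ∧
    Odd (8999757 : ℕ) := by
  refine ⟨by norm_num, ?_, by norm_num, by decide, by decide⟩
  have h := ArithmeticFunction.isMultiplicative_sigma (k := 1)
  have h1 : ArithmeticFunction.sigma 1 147537 =
      ArithmeticFunction.sigma 1 (3^2) * ArithmeticFunction.sigma 1 (13^2 * 97) := by
    rw [← h.map_mul_of_coprime (by decide)]; norm_num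
  have h2 : ArithmeticFunction.sigma 1 (13^2 * 97) =
      ArithmeticFunction.sigma 1 (13^2) * ArithmeticFunction.sigma 1 97 :=
    h.map_mul_of_coprime (by decide)
  have e1 : ArithmeticFunction.sigma 1 (3^2) = 13 := by
    rw [ArithmeticFunction.sigma_one_apply]; decide
  have e2 : ArithmeticFunction.sigma 1 (13^2) = 183 := by
    rw [ArithmeticFunction.sigma_one_apply]; decide
  have e3 : ArithmeticFunction.sigma 1 97 = 98 := by
    rw [ArithmeticFunction.sigma_one_apply]; decide
  rw [h1, h2, e1, e2, e3]; norm_num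
end

section
/- The integer s = 440988093 = 7229313 · 61 is an odd spoof 114-perfect number of order 2: σ(7229313)·(61² + 61 + 1) = 114 · 440988093; moreover 61 is prime, 61 is coprime to 7229313, and 440988093 is odd. -/
theorem spoof_440988093 :
    (440988093 : ℕ) = 7229313 * 61 ∧
    ArithmeticFunction.sigma 1 7229313 * (61 ^ 2 + 61 + 1) = 114 * 440988093 ∧
    Nat.Prime 61 ∧
    Nat.Coprime 61 7229313 ∧
    Odd (440988093 : ℕ) := by
  have hs : ArithmeticFunction.sigma 1 7229313 = 13289094 := by
    rw [ArithmeticFunction.sigma_one_apply,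
      show (7229313 : ℕ) = 9 * 803257 from by norm_num,
      Nat.Coprime.sum_divisors_mul (by norm_num),
      show (803257 : ℕ) = 49 * 16393 from by norm_num,
      Nat.Coprime.sum_divisors_mul (by norm_num),
      show (16393 : ℕ) = 169 * 97 from by norm_num,
      Nat.Coprime.sum_divisors_mul (by norm_num)]
    decide
  exact ⟨by norm_num, by rw [hs]; norm_num, by norm_num, by decide, by decide⟩
end
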